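/- arXiv:2208.04410 — 7 statements merged into one kernel-verified Lean document; each statement's English description precedes it below -/
import Mathlib

section
/- Fix ε ∈ (0, 1/10) and consider the three destinations A = −1−ε, B = 1, C = 2 on the real line, with a traveler starting at the origin 0. Among the six possible visiting orders of {A, B, C}, the order (A, B, C) is the unique minimizer of ℓ₁² + ℓ₂² + ℓ₃² (the squared Euclidean norm of the visit-time vector), while the order (B, C, A) is the unique minimizer of ℓ₁ + ℓ₂ + ℓ₃ (the L1 norm of the visit-time vector). In particular, the optimal routes for the L2 and L1 objectives differ. -/
/-- The vector of visit times of a route on the real line that starts at the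
origin `0` and visits the points `v 0, v 1, v 2` in order at unit speed. -/
def visitTimes (v : Fin 3 → ℝ) : Fin 3 → ℝ :=
  ![|v 0|, |v 0| + |v 1 - v 0|, |v 0| + |v 1 - v 0| + |v 2 - v 1|]

/-- The squared Euclidean (L2) cost of a route: `ℓ₁² + ℓ₂² + ℓ₃²`. -/
def costL2sq (v : Fin 3 → ℝ) : ℝ := ∑ i, (visitTimes v i) ^ 2

/-- The L1 cost of a route: `ℓ₁ + ℓ₂ + ℓ₃`. -/
def costL1 (v : Fin 3 → ℝ) : ℝ := ∑ i, visitTimes v i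

/-!
Write `A = -1 - ε`, `B = 1`, `C = 2`. The visit-time vectors of the orders ABC, ACB, BAC, BCA,
CAB, CBA are `(1+ε, 3+2ε, 4+2ε)`, `(1+ε, 4+2ε, 5+2ε)`, `(1, 3+ε, 6+2ε)`, `(1, 2, 5+ε)`,
`(2, 5+ε, 7+2ε)`, `(2, 3, 5+ε)`. Their sums are `8+5ε, 10+5ε, 10+3ε, 8+ε, 14+3ε, 10+ε`, so BCA
wins in L1 as soon as `ε > 0`. Their squared norms are `26+30ε+9ε², 42+38ε+9ε², 46+30ε+5ε²,
30+10ε+ε², 78+38ε+5ε², 38+10ε+ε²`; the only close competitor of ABC is BCA, which it beats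
exactly when `2ε² + 5ε < 1`: the squares penalise the late final visit `5+ε` of BCA more than
they reward its early first two visits.
-/

open Equiv

theorem Equiv.Perm.fin_three_cases (σ : Perm (Fin 3)) :
    σ = 1 ∨ σ = finRotate 3 ∨ σ = (finRotate 3).symm ∨ σ = swap 0 1 ∨ σ = swap 1 2 ∨
      σ = swap 0 2 := by
  revert σ
  decide

theorem costL1_eq (v : Fin 3 → ℝ) :
    costL1 v = 3 * |v 0| + 2 * |v 1 - v 0| + |v 2 - v 1| := by
  simp [costL1, visitTimes, Fin.sum_univ_three]
  ring

theorem costL2sq_eq (v : Fin 3 → ℝ) :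
    costL2sq v =
      |v 0| ^ 2 + (|v 0| + |v 1 - v 0|) ^ 2 + (|v 0| + |v 1 - v 0| + |v 2 - v 1|) ^ 2 := by
  simp [costL2sq, visitTimes, Fin.sum_univ_three]

section
variable {ε : ℝ}

theorem leg_lengths (hε : -1 < ε) :
    |-1 - ε| = 1 + ε ∧ |1 - (-1 - ε)| = 2 + ε ∧ |-1 - ε - 1| = 2 + ε ∧
      |2 - (-1 - ε)| = 3 + ε ∧ |-1 - ε - 2| = 3 + ε ∧ |(2 : ℝ) - 1| = 1 ∧ |(1 : ℝ) - 2| = 1 := by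
  refine ⟨?_, ?_, ?_, ?_, ?_, by norm_num, by norm_num⟩ <;>
    first
    | rw [abs_of_neg (by linarith)]; ring
    | rw [abs_of_pos (by linarith)]; ring

theorem costL2sq_lt_comp_of_ne_one (hε : -1 < ε) (hsmall : 2 * ε ^ 2 + 5 * ε < 1)
    {σ : Perm (Fin 3)} (hσ : σ ≠ 1) :
    costL2sq ![-1 - ε, 1, 2] < costL2sq (![-1 - ε, 1, 2] ∘ σ) := by
  obtain ⟨hA, hAB, hBA, hAC, hCA, hCB, hBC⟩ := leg_lengths hε
  rcases σ.fin_three_cases with rfl | rfl | rfl | rfl | rfl | rfl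
  · exact absurd rfl hσ
  all_goals
    simp [costL2sq_eq, swap_apply_def, hA, hAB, hBA, hAC, hCA, hCB, hBC]
    nlinarith

theorem costL1_comp_finRotate_lt (hε : 0 < ε) {σ : Perm (Fin 3)} (hσ : σ ≠ finRotate 3) :
    costL1 (![-1 - ε, 1, 2] ∘ finRotate 3) < costL1 (![-1 - ε, 1, 2] ∘ σ) := by
  obtain ⟨hA, hAB, hBA, hAC, hCA, hCB, hBC⟩ := leg_lengths (ε := ε) (by linarith)
  rcases σ.fin_three_cases with rfl | rfl | rfl | rfl | rfl | rfl
  on_goal 2 => exact absurd rfl hσ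
  all_goals
    simp [costL1_eq, swap_apply_def, hA, hAB, hBA, hAC, hCA, hCB, hBC]
    linarith

end

/-- For destinations `A = -1-ε`, `B = 1`, `C = 2` with `ε ∈ (0, 1/10)` and a
traveler starting at the origin, the order `(A, B, C)` (the identity
permutation of the points) is the unique minimizer of the squared L2 cost
among the six visiting orders, while `(B, C, A)` (the rotation permutation)
is the unique minimizer of the L1 cost; in particular the two optimal routes
differ. -/
theorem l2_and_l1_optima_differ
    (ε : ℝ) (hε : ε ∈ Set.Ioo (0 : ℝ) (1 / 10))
    (pts : Fin 3 → ℝ) (hpts : pts = ![-1 - ε, 1, 2]) :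
    (∀ σ : Equiv.Perm (Fin 3), σ ≠ Equiv.refl (Fin 3) →
      costL2sq (pts ∘ Equiv.refl (Fin 3)) < costL2sq (pts ∘ σ)) ∧
    (∀ σ : Equiv.Perm (Fin 3), σ ≠ finRotate 3 →
      costL1 (pts ∘ finRotate 3) < costL1 (pts ∘ σ)) ∧
    (Equiv.refl (Fin 3) ≠ finRotate 3) := by
  obtain ⟨hε₀, hε₁⟩ := hε
  subst hpts
  exact ⟨fun σ hσ => costL2sq_lt_comp_of_ne_one (by linarith) (by nlinarith) hσ,
    fun σ hσ => costL1_comp_finRotate_lt hε₀ hσ, by decide⟩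
end

section
/- Let b = 1001/1000 and n = 2100. Then (2·b^n − 1)/(b^n + 1) ≥ 1.67, and (1 + 2n + b^{n+1}/(b−1) − n − 1) / (b^{n+1}/(b−1) − n − 1 + 2·b^n − 1) ≥ 1.67. -/
/-!
Everything is a function of `x = b ^ n ≈ e ^ 2.1 ≈ 8.16`. The L∞ ratio `(2x - 1)/(x + 1)` is at
least `1.67` as soon as `x ≥ 267/33 ≈ 8.09`. Since `b ^ (n+1)/(b - 1) = 1001 x`, the L1 ratio is
`(1001x + 2100)/(1003x - 2102)`, which is at least `1.67` as long as `x ≤ 5610.34/674.01 ≈ 8.32`.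
Both bounds on `b ^ 2100 = (b ^ 100) ^ 21` follow from `1.105 ≤ b ^ 100 ≤ 1.1052`.
-/

section PowBounds

variable {R : Type*} [Semiring R] [PartialOrder R] [IsOrderedRing R]

theorem pow_le_pow_mul_of_le_pow {a x : R} {k : ℕ} (ha : 0 ≤ a) (h : a ≤ x ^ k) (m : ℕ) :
    a ^ m ≤ x ^ (k * m) := by
  rw [pow_mul]
  exact pow_le_pow_left₀ ha h m

theorem pow_mul_le_pow_of_pow_le {a x : R} {k : ℕ} (hx : 0 ≤ x) (h : x ^ k ≤ a) (m : ℕ) :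
    x ^ (k * m) ≤ a ^ m := by
  rw [pow_mul]
  exact pow_le_pow_left₀ (pow_nonneg hx k) h m

end PowBounds

theorem pow_2100_mem_Icc : (1001 / 1000 : ℝ) ^ 2100 ∈ Set.Icc (81 / 10) (82 / 10) :=
  ⟨le_trans (by norm_num) (pow_le_pow_mul_of_le_pow (a := 1105 / 1000) (k := 100)
      (by norm_num) (by norm_num) 21),
    le_trans (pow_mul_le_pow_of_pow_le (a := 11052 / 10000) (k := 100)
      (by norm_num) (by norm_num) 21) (by norm_num)⟩

theorem linfty_ratio_ge {x : ℝ} (hx : 81 / 10 ≤ x) : (2 * x - 1) / (x + 1) ≥ 1.67 := by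
  rw [ge_iff_le, le_div_iff₀ (by linarith)]
  linarith

theorem l1_ratio_ge {x : ℝ} (hx : x ∈ Set.Icc (81 / 10) (82 / 10)) :
    (1 + 2 * 2100 + 1001 * x - 2100 - 1) / (1001 * x - 2100 - 1 + 2 * x - 1) ≥ 1.67 := by
  obtain ⟨hlo, hhi⟩ := hx
  rw [ge_iff_le, le_div_iff₀ (by linarith)]
  linarith

/-- Numerical bounds for the All-Norm TSP lower-bound instance on the line:
for `b = 1001/1000` and `n = 2100`, both the L∞ ratio `(2b^n − 1)/(b^n + 1)`
and the L1 ratio `(1 + 2n + b^{n+1}/(b−1) − n − 1)/(b^{n+1}/(b−1) − n − 1 +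
2b^n − 1)` are at least `1.67`. -/
theorem allNorm_lower_bound_ratios :
    let b : ℝ := 1001 / 1000
    let n : ℕ := 2100
    (2 * b ^ n - 1) / (b ^ n + 1) ≥ 1.67 ∧
    (1 + 2 * (n : ℝ) + b ^ (n + 1) / (b - 1) - (n : ℝ) - 1) /
        (b ^ (n + 1) / (b - 1) - (n : ℝ) - 1 + 2 * b ^ n - 1) ≥ 1.67 := by
  intro b n
  have hx : b ^ n ∈ Set.Icc (81 / 10) (82 / 10) := pow_2100_mem_Icc
  have hgeom : ∀ y : ℝ, y * b / (b - 1) = 1001 * y := fun y => by norm_num [b]; ring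
  refine ⟨linfty_ratio_ge hx.1, ?_⟩
  rw [pow_succ, hgeom]
  exact_mod_cast l1_ratio_ge hx
end

section
/- For every real number p ≥ 1 and every x ∈ [0, 1], one has (1 + 3x)^p ≤ 1 + (3p)^p · x. -/
/-!
By convexity of `t ↦ t ^ p`, the left side lies below the chord through `t = 1` and `t = 4`,
i.e. `(1 + 3x)^p ≤ 1 + (4^p - 1) x`, so it suffices that `4^p - 1 ≤ (3p)^p`. For `p ≥ 4/3` this
follows from `4 ≤ 3p`. For `p = 1 + s` with `s ∈ [0, 1]` we use `p 3^p ≤ (3p)^p`, Bernoulli's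
inequality `(4/3)^s ≤ 1 + s/3`, and `3^s (1 - 5s/3) ≤ exp (5s/3) exp (-5s/3) = 1`.
-/

open Real

theorem one_add_mul_rpow_le_chord {p a x : ℝ} (hp : 1 ≤ p) (ha : 0 ≤ a)
    (hx : x ∈ Set.Icc (0 : ℝ) 1) :
    (1 + a * x) ^ p ≤ 1 + ((1 + a) ^ p - 1) * x := by
  obtain ⟨hx0, hx1⟩ := hx
  have h := (convexOn_rpow hp).2 (Set.mem_Ici.2 zero_le_one)
    (Set.mem_Ici.2 (by linarith : (0 : ℝ) ≤ 1 + a)) (sub_nonneg.2 hx1) hx0 (sub_add_cancel 1 x)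
  simp only [smul_eq_mul, one_rpow] at h
  calc (1 + a * x) ^ p = ((1 - x) * 1 + x * (1 + a)) ^ p := by ring_nf
    _ ≤ (1 - x) * 1 + x * (1 + a) ^ p := h
    _ = 1 + ((1 + a) ^ p - 1) * x := by ring

theorem log_three_le_five_div_three : log 3 ≤ 5 / 3 := by
  rw [log_le_iff_le_exp three_pos]
  calc (3 : ℝ) ≤ (5 / 6 + 1) ^ 2 := by norm_num
    _ ≤ exp (5 / 6) ^ 2 := by gcongr; exact add_one_le_exp _
    _ = exp (5 / 3) := by rw [sq, ← exp_add]; norm_num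

theorem three_rpow_mul_one_sub_le_one {s : ℝ} (hs : 0 ≤ s) :
    (3 : ℝ) ^ s * (1 - 5 / 3 * s) ≤ 1 := by
  have h3 : (3 : ℝ) ^ s ≤ exp (5 / 3 * s) := by
    rw [rpow_def_of_pos three_pos]
    gcongr
    exact log_three_le_five_div_three
  calc (3 : ℝ) ^ s * (1 - 5 / 3 * s) ≤ 3 ^ s * exp (-(5 / 3 * s)) := by
        gcongr
        linarith [add_one_le_exp (-(5 / 3 * s))]
    _ ≤ exp (5 / 3 * s) * exp (-(5 / 3 * s)) := by gcongr
    _ = 1 := by rw [← exp_add, add_neg_cancel, exp_zero]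

theorem four_rpow_sub_one_le_mul_three_rpow {p : ℝ} (hp1 : 1 ≤ p) (hp2 : p ≤ 2) :
    (4 : ℝ) ^ p - 1 ≤ p * 3 ^ p := by
  obtain ⟨s, rfl⟩ : ∃ s, p = 1 + s := ⟨p - 1, by ring⟩
  have hs : 0 ≤ s := by linarith
  have hbernoulli : (4 / 3 : ℝ) ^ s ≤ 1 + s / 3 := by
    have := rpow_one_add_le_one_add_mul_self (s := 1 / 3) (by norm_num) hs (by linarith)
    norm_num at this
    linarith
  have h4 : (4 : ℝ) ^ (1 + s) = 4 * 3 ^ s * (4 / 3) ^ s := by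
    rw [rpow_add (by norm_num), rpow_one, mul_assoc, ← mul_rpow (by norm_num) (by norm_num)]
    norm_num
  have h3 : (3 : ℝ) ^ (1 + s) = 3 * 3 ^ s := by rw [rpow_add three_pos, rpow_one]
  rw [h4, h3]
  nlinarith [mul_le_mul_of_nonneg_left hbernoulli (rpow_nonneg zero_le_three s),
    three_rpow_mul_one_sub_le_one hs]

theorem four_rpow_sub_one_le_three_mul_rpow {p : ℝ} (hp : 1 ≤ p) :
    (4 : ℝ) ^ p - 1 ≤ (3 * p) ^ p := by
  rcases le_total p 2 with hp2 | hp2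
  · calc (4 : ℝ) ^ p - 1 ≤ p * 3 ^ p := four_rpow_sub_one_le_mul_three_rpow hp hp2
      _ ≤ p ^ p * 3 ^ p := by gcongr; exact self_le_rpow_of_one_le hp hp
      _ = (3 * p) ^ p := by rw [mul_rpow zero_le_three (by linarith), mul_comm]
  · have : (4 : ℝ) ^ p ≤ (3 * p) ^ p := rpow_le_rpow (by norm_num) (by linarith) (by linarith)
    linarith

/-- Pointwise estimate used in the reduction of `L_p` TSP to Segmented TSP:
for `p ≥ 1` and `x ∈ [0, 1]`, `(1 + 3x)^p ≤ 1 + (3p)^p · x`. -/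
theorem one_add_three_mul_rpow_le
    (p x : ℝ) (hp : 1 ≤ p) (hx : x ∈ Set.Icc (0 : ℝ) 1) :
    (1 + 3 * x) ^ p ≤ 1 + (3 * p) ^ p * x := by
  calc (1 + 3 * x) ^ p ≤ 1 + ((1 + 3) ^ p - 1) * x := one_add_mul_rpow_le_chord hp zero_le_three hx
    _ ≤ 1 + (3 * p) ^ p * x := by
      gcongr
      · exact hx.1
      · norm_num
        linarith [four_rpow_sub_one_le_three_mul_rpow hp]
end

section
/- Let c > 1 and p ≥ 1 be real numbers and let a ∈ [1, c]. Then c^p · ∫_0^{log a / log c} c^{p·u} du + ∫_{log a / log c}^1 c^{p·u} du = a^p · (c^p − 1) / (p · log c), where c^{p·u} denotes exp(p·u·log c) and log is the natural logarithm. -/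
open intervalIntegral Real

/-
With `k = p log c`, both integrals are elementary: `∫ e^{ku} du = (e^{k t₂} - e^{k t₁}) / k`,
and at the split point `u = log a / log c` the integrand equals `a^p`. The left piece contributes
`c^p (a^p - 1) / k` and the right piece `(c^p - a^p) / k`; the `c^p` terms cancel against each
other, leaving `a^p (c^p - 1) / k`.
-/

theorem integral_exp_const_mul (k t₁ t₂ : ℝ) (hk : k ≠ 0) :
    ∫ u in t₁..t₂, exp (k * u) = (exp (k * t₂) - exp (k * t₁)) / k := by
  rw [intervalIntegral.integral_comp_mul_left exp hk, integral_exp, smul_eq_mul, inv_mul_eq_div]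

theorem exp_mul_log_div_log (p : ℝ) {a c : ℝ} (ha : 0 < a) (hc : log c ≠ 0) :
    exp (p * log c * (log a / log c)) = a ^ p := by
  rw [rpow_def_of_pos ha, mul_assoc, mul_div_cancel₀ _ hc, mul_comm]

/-- Integral identity computing `E[b^p · c^{p·1[a ≥ b]}]` for `b = c^U`, `U`
uniform on `[0,1)`: for `c > 1`, `p ≥ 1` and `a ∈ [1, c]`,
`c^p ∫_0^{log_c a} c^{pu} du + ∫_{log_c a}^1 c^{pu} du
  = a^p (c^p − 1)/(p log c)`. -/
theorem expected_power_integral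
    (c p a : ℝ) (hc : 1 < c) (hp : 1 ≤ p) (ha : a ∈ Set.Icc 1 c) :
    c ^ p * (∫ u in (0 : ℝ)..(Real.log a / Real.log c),
        Real.exp (p * u * Real.log c)) +
      (∫ u in (Real.log a / Real.log c)..(1 : ℝ),
        Real.exp (p * u * Real.log c)) =
    a ^ p * (c ^ p - 1) / (p * Real.log c) := by
  have hlog : log c ≠ 0 := (log_pos hc).ne'
  have hk : p * log c ≠ 0 := mul_ne_zero (by positivity) hlog
  have hc_pow : exp (p * log c * 1) = c ^ p := by
    rw [mul_one, rpow_def_of_pos (by linarith), mul_comm]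
  simp only [mul_right_comm p _ (log c)]
  rw [integral_exp_const_mul _ _ _ hk, integral_exp_const_mul _ _ _ hk,
    exp_mul_log_div_log p (by linarith [ha.1]) hlog, hc_pow, mul_zero, exp_zero]
  field_simp
  ring
end

section
/- Let b > 0, c > 1 and p ≥ 1 be real numbers, let j be a natural number, set S = ∑_{m=0}^{j} 2·b·c^m, and let u ∈ [0, 2·b·c^{j+1}]. Then (1/2)·(S + u)^p + (1/2)·(S + 2·b·c^{j+1} − u)^p ≤ 2^{p−1}·(c^p + 1)·(b·c^{j+1})^p / (c − 1)^p. -/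
/-!
The value of `u ↦ (S + u)^p + (S + L - u)^p` at an interior point of `[0, L]` is at most its
value at the endpoints, by convexity of `x ↦ x^p`. The geometric sum gives `S ≤ 2B` and
`S + L ≤ 2cB` with `B = b c^{j+1} / (c - 1)`, and the endpoint value `½(2B)^p + ½(2cB)^p` is
exactly the right-hand side.
-/

open Finset Set

lemma ConvexOn.map_add_add_map_sub_le {s : Set ℝ} {f : ℝ → ℝ} (hf : ConvexOn ℝ s f)
    {x y u : ℝ} (hx : x ∈ s) (hy : y ∈ s) (hu : u ∈ Icc 0 (y - x)) :
    f (x + u) + f (y - u) ≤ f x + f y := by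
  obtain ⟨hu0, huxy⟩ := hu
  set t := u / (y - x)
  have ht0 : 0 ≤ t := div_nonneg hu0 (hu0.trans huxy)
  have ht1 : t ≤ 1 := div_le_one_of_le₀ huxy (hu0.trans huxy)
  have htu : t * (y - x) = u := div_mul_cancel_of_imp fun h => by linarith
  have hleft : f (x + u) ≤ (1 - t) * f x + t * f y := by
    have := hf.2 hx hy (sub_nonneg.2 ht1) ht0 (sub_add_cancel 1 t)
    rwa [smul_eq_mul, smul_eq_mul, show (1 - t) * x + t * y = x + u by linear_combination htu]
      at this
  have hright : f (y - u) ≤ t * f x + (1 - t) * f y := by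
    have := hf.2 hx hy ht0 (sub_nonneg.2 ht1) (add_sub_cancel t 1)
    rwa [smul_eq_mul, smul_eq_mul, show t * x + (1 - t) * y = y - u by linear_combination -htu]
      at this
  linarith

lemma geom_sum_le_pow_div_sub_one {c : ℝ} (hc : 1 < c) (n : ℕ) :
    ∑ i ∈ range n, c ^ i ≤ c ^ n / (c - 1) := by
  rw [geom_sum_eq hc.ne']
  gcongr
  linarith

lemma one_half_mul_two_mul_rpow {x : ℝ} (hx : 0 ≤ x) (p : ℝ) :
    1 / 2 * (2 * x) ^ p = 2 ^ (p - 1) * x ^ p := by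
  rw [Real.mul_rpow zero_le_two hx, Real.rpow_sub_one two_ne_zero]
  ring

/-- Bound on the expected `p`-th power of a visit time when the covering cycle
in iteration `j+1` (of length at most `2bc^{j+1}`) is traversed in either
direction with probability `1/2`, after earlier subtours of total length
`S = ∑_{m=0}^{j} 2bc^m`. -/
theorem cycle_traversal_power_bound
    (b c p : ℝ) (hb : 0 < b) (hc : 1 < c) (hp : 1 ≤ p) (j : ℕ)
    (S : ℝ) (hS : S = ∑ m ∈ Finset.range (j + 1), 2 * b * c ^ m)
    (u : ℝ) (hu : u ∈ Set.Icc 0 (2 * b * c ^ (j + 1))) :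
    (1 / 2) * (S + u) ^ p + (1 / 2) * (S + 2 * b * c ^ (j + 1) - u) ^ p ≤
      2 ^ (p - 1) * (c ^ p + 1) * (b * c ^ (j + 1)) ^ p / (c - 1) ^ p := by
  have hc1 : 0 < c - 1 := sub_pos.2 hc
  have hS0 : 0 ≤ S := hS ▸ sum_nonneg fun m _ => by positivity
  set B := b * c ^ (j + 1) / (c - 1) with hBdef
  have hB : 0 ≤ B := by positivity
  have hS2B : S ≤ 2 * B := by
    rw [hS, ← mul_sum, mul_assoc, hBdef, mul_div_assoc]
    gcongr
    exact geom_sum_le_pow_div_sub_one hc _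
  have hcB : c * B = B + b * c ^ (j + 1) := by
    rw [hBdef]; field_simp; ring
  have hends := (convexOn_rpow hp).map_add_add_map_sub_le (x := S) (y := S + 2 * b * c ^ (j + 1))
    hS0 (by rw [Set.mem_Ici]; positivity) (by simpa using hu)
  calc (1 / 2) * (S + u) ^ p + (1 / 2) * (S + 2 * b * c ^ (j + 1) - u) ^ p
      ≤ 1 / 2 * S ^ p + 1 / 2 * (S + 2 * b * c ^ (j + 1)) ^ p := by linarith
    _ ≤ 1 / 2 * (2 * B) ^ p + 1 / 2 * (2 * (c * B)) ^ p := by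
        gcongr
        linarith
    _ = 2 ^ (p - 1) * (c ^ p + 1) * (b * c ^ (j + 1)) ^ p / (c - 1) ^ p := by
        rw [one_half_mul_two_mul_rpow hB, one_half_mul_two_mul_rpow (by positivity),
          Real.mul_rpow (by positivity) hB, Real.div_rpow (by positivity) hc1.le]
        ring
end

section
/- Let η ≥ 1 be a real number, let K be a positive integer, and let y₁, …, y_K ∈ [0, 1] with ∑_{i=1}^K y_i ≤ 1. Then ∏_{i=1}^K (1 − y_i/η) ≤ e^{−1/η} + (1 − e^{−1/η})·(1 − ∑_{i=1}^K y_i). -/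
open Finset Real

theorem Real.prod_one_sub_le_exp_neg_sum {ι : Type*} (s : Finset ι) {f : ι → ℝ}
    (hf : ∀ i ∈ s, f i ≤ 1) : ∏ i ∈ s, (1 - f i) ≤ exp (-∑ i ∈ s, f i) := by
  calc ∏ i ∈ s, (1 - f i) ≤ ∏ i ∈ s, exp (-f i) :=
        prod_le_prod (fun i hi ↦ sub_nonneg.2 (hf i hi)) fun i _ ↦ one_sub_le_exp_neg _
    _ = exp (-∑ i ∈ s, f i) := by rw [← sum_neg_distrib, exp_sum]

theorem Real.exp_mul_le_one_sub_add_mul_exp {t : ℝ} (ht₀ : 0 ≤ t) (ht₁ : t ≤ 1) (x : ℝ) :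
    exp (t * x) ≤ 1 - t + t * exp x := by
  have := convexOn_exp.2 (Set.mem_univ 0) (Set.mem_univ x) (sub_nonneg.2 ht₁) ht₀ (by ring)
  simpa only [smul_eq_mul, mul_zero, zero_add, exp_zero, mul_one] using this

theorem multi_vehicle_probability_bound_general
    (η : ℝ) (hη : 1 ≤ η) (K : ℕ)
    (y : Fin K → ℝ) (hy : ∀ i, y i ∈ Set.Icc (0 : ℝ) 1)
    (hsum : ∑ i, y i ≤ 1) :
    ∏ i, (1 - y i / η) ≤
      Real.exp (-1 / η) + (1 - Real.exp (-1 / η)) * (1 - ∑ i, y i) := by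
  have hη₀ : 0 < η := one_pos.trans_le hη
  have hy_div : ∀ i ∈ univ, y i / η ≤ 1 := fun i _ ↦
    div_le_one_of_le₀ ((hy i).2.trans hη) hη₀.le
  calc ∏ i, (1 - y i / η) ≤ exp (-∑ i, y i / η) := prod_one_sub_le_exp_neg_sum _ hy_div
    _ = exp ((∑ i, y i) * (-1 / η)) := by rw [← sum_div]; ring_nf
    _ ≤ 1 - ∑ i, y i + (∑ i, y i) * exp (-1 / η) :=
        exp_mul_le_one_sub_add_mul_exp (sum_nonneg fun i _ ↦ (hy i).1) hsum _
    _ = exp (-1 / η) + (1 - exp (-1 / η)) * (1 - ∑ i, y i) := by ring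

/-- Probability estimate for the multi-vehicle LP-rounding algorithm: if
`η ≥ 1` and `y₁, …, y_K ∈ [0, 1]` with `∑ y_i ≤ 1`, then
`∏ (1 − y_i/η) ≤ e^{−1/η} + (1 − e^{−1/η})(1 − ∑ y_i)`. -/
theorem multi_vehicle_probability_bound
    (η : ℝ) (hη : 1 ≤ η) (K : ℕ) (hK : 0 < K)
    (y : Fin K → ℝ) (hy : ∀ i, y i ∈ Set.Icc (0 : ℝ) 1)
    (hsum : ∑ i, y i ≤ 1) :
    ∏ i, (1 - y i / η) ≤
      Real.exp (-1 / η) + (1 - Real.exp (-1 / η)) * (1 - ∑ i, y i) :=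
  multi_vehicle_probability_bound_general η hη K y hy hsum
end

section
/- For every real number p ≥ 1, there exists a real number c with 1 < c and c^p < e such that (e − 1)·2^{p−1}·(c^{2p} − 1) / (p·(c − 1)^p·(e − c^p)·log c) < (18·p)^p, where log is the natural logarithm and e is Euler's number. -/
/-!
Take `c = a^{1/p}` for a fixed `1 < a < e` (here `a = 5/4`), so that `c^p = a` and
`p log c = log a`. Since `log c ≤ c - 1`, the denominator is at least
`(log a / p)^p (e - a) log a`, and multiplying by `(18p)^p` turns it into
`(18 log a)^p (e - a) log a ≥ 2^p · 9 log a · (e - a) log a` once `9 log a ≥ 1`.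
The numerator is `2^p (e - 1)(a² - 1) / 2`, so the factor `2^p` cancels and what is left
is a numerical inequality in `a` alone.
-/

open Real

lemma mul_log_rpow_le_rpow_mul_sub_one_rpow {k c p : ℝ} (hk : 0 ≤ k) (hc : 1 ≤ c)
    (hp : 0 ≤ p) : (k * log c) ^ p ≤ k ^ p * (c - 1) ^ p := by
  have hlog : log c ≤ c - 1 := log_le_sub_one_of_pos (by linarith)
  have := log_nonneg hc
  rw [← mul_rpow hk (by linarith)]
  gcongr

lemma two_rpow_mul_le_two_mul_rpow {p y : ℝ} (hp : 1 ≤ p) (hy : 1 ≤ y) :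
    2 ^ p * y ≤ (2 * y) ^ p := by
  rw [mul_rpow (by norm_num) (by linarith)]
  gcongr
  exact self_le_rpow_of_one_le hy hp

theorem lp_rounding_ratio_lt {p a c : ℝ} (hp : 1 ≤ p) (hc : 1 < c) (hcp : c ^ p = a)
    (hae : a < exp 1) (h9 : 1 ≤ 9 * log a)
    (hnum : (exp 1 - 1) * (a ^ 2 - 1) < 18 * log a ^ 2 * (exp 1 - a)) :
    (exp 1 - 1) * 2 ^ (p - 1) * (c ^ (2 * p) - 1) /
        (p * (c - 1) ^ p * (exp 1 - c ^ p) * log c) < (18 * p) ^ p := by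
  have hp0 : 0 < p := by linarith
  have hlog : p * log c = log a := by rw [← hcp, log_rpow (by linarith)]
  have hc2p : c ^ (2 * p) = a ^ 2 := by
    rw [mul_comm, rpow_mul (by linarith), hcp, rpow_two]
  have hL : 0 < log a := by linarith
  have hden : 0 < p * (c - 1) ^ p * (exp 1 - a) * log c := by
    have := log_pos hc
    have := rpow_pos_of_pos (sub_pos.2 hc) p
    positivity
  rw [hcp, div_lt_iff₀ hden, hc2p, rpow_sub_one two_ne_zero]
  have h2p : 0 < (2 : ℝ) ^ p := rpow_pos_of_pos two_pos p
  calc (exp 1 - 1) * (2 ^ p / 2) * (a ^ 2 - 1)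
      < 2 ^ p * (9 * log a) * (exp 1 - a) * log a := by nlinarith
    _ ≤ (18 * log a) ^ p * (exp 1 - a) * log a := by
      rw [show 18 * log a = 2 * (9 * log a) by ring]
      gcongr
      exact two_rpow_mul_le_two_mul_rpow hp h9
    _ ≤ (18 * p) ^ p * (c - 1) ^ p * (exp 1 - a) * log a := by
      gcongr
      rw [← hlog, ← mul_assoc]
      exact mul_log_rpow_le_rpow_mul_sub_one_rpow (by positivity) hc.le hp0.le
    _ = (18 * p) ^ p * (p * (c - 1) ^ p * (exp 1 - a) * log c) := by
      rw [← hlog]; ring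

lemma one_fifth_le_log_five_fourths : (1 / 5 : ℝ) ≤ log (5 / 4) := by
  have := one_sub_inv_le_log_of_pos (show (0 : ℝ) < 5 / 4 by norm_num)
  norm_num at this ⊢
  linarith

/-- For every `p ≥ 1` there is a `c > 1` with `c^p < e` for which the bound
`(e − 1)2^{p−1}(c^{2p} − 1)/(p(c − 1)^p(e − c^p) log c)` on
`E[‖ℓ^R‖_p^p]/‖ℓ^OPT‖_p^p` in the LP-rounding analysis of multi-vehicle
`L_p` TSP is strictly below `(18p)^p`. -/
theorem multi_lp_tsp_constant_exists (p : ℝ) (hp : 1 ≤ p) :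
    ∃ c : ℝ, 1 < c ∧ c ^ p < Real.exp 1 ∧
      (Real.exp 1 - 1) * 2 ^ (p - 1) * (c ^ (2 * p) - 1) /
          (p * (c - 1) ^ p * (Real.exp 1 - c ^ p) * Real.log c) <
        (18 * p) ^ p := by
  have hp0 : 0 < p := by linarith
  have hcp : ((5 / 4 : ℝ) ^ p⁻¹) ^ p = 5 / 4 := rpow_inv_rpow (by norm_num) hp0.ne'
  have he : (5 / 4 : ℝ) < exp 1 := by linarith [exp_one_gt_d9]
  have hc : 1 < (5 / 4 : ℝ) ^ p⁻¹ := one_lt_rpow (by norm_num) (inv_pos.2 hp0)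
  have hL := one_fifth_le_log_five_fourths
  refine ⟨(5 / 4) ^ p⁻¹, hc, by rwa [hcp], ?_⟩
  apply lp_rounding_ratio_lt hp hc hcp he
  · linarith
  · have hL2 : (1 / 25 : ℝ) ≤ log (5 / 4) ^ 2 := by nlinarith
    nlinarith [mul_le_mul_of_nonneg_right hL2 (sub_pos.2 he).le, exp_one_gt_d9]
end
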